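/- For any j ≠ j' ∈ [d] and l,l' ∈ {1,…,m+1}, the compression ⟨j'| Π_sym^{d,m+1} |j⟩ of the symmetric projector onto computational basis states of the first factor satisfies: (|j'⟩⟨j'| ⊗ I) Π_sym^{d,m+1} (|j⟩⟨j| ⊗ I) = |j'⟩⟨j| ⊗ Σ_{l,l'≥1}^{m+1} √(l/(m+1)) √(l'/(m+1)) Σ_{t⃗ ∈ T^{m+1}_{(j',l'),(j,l)}} |s(t⃗_{-j'})⟩⟨s(t⃗_{-j})|. -/

import Mathlib

open scoped BigOperators Matrix

noncomputable def tensPow (α : Type*) (m : ℕ) (φ : α → ℂ) :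
    EuclideanSpace ℂ (Fin m → α) := WithLp.toLp 2 (fun j => ∏ k, φ (j k))

noncomputable def symSubspace (α : Type*) (m : ℕ) :
    Submodule ℂ (EuclideanSpace ℂ (Fin m → α)) :=
  Submodule.span ℂ (Set.range (tensPow α m))

/-- Matrix of the orthogonal projector onto the symmetric subspace of `(ℂ^α)^{⊗m}`. -/
noncomputable def symProj (α : Type*) [Fintype α] [DecidableEq α] (m : ℕ) :
    Matrix (Fin m → α) (Fin m → α) ℂ :=
  fun a b => (inner ℂ (EuclideanSpace.single a (1:ℂ))
    ((Submodule.orthogonalProjection (symSubspace α m) (EuclideanSpace.single b (1:ℂ)) :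
      symSubspace α m) : EuclideanSpace ℂ (Fin m → α)) : ℂ)

def typeOf {α : Type*} [Fintype α] [DecidableEq α] {m : ℕ} (j : Fin m → α) : α → ℕ :=
  fun i => (Finset.univ.filter (fun k => j k = i)).card

def Idm (α : Type*) [Fintype α] [DecidableEq α] (m : ℕ) : Finset (α → ℕ) :=
  ((Finset.univ : Finset (α → Fin (m+1))).image (fun f i => (f i : ℕ))).filter
    (fun t => ∑ i, t i = m)

noncomputable def typeVec (α : Type*) [Fintype α] [DecidableEq α] (m : ℕ) (t : α → ℕ) :
    EuclideanSpace ℂ (Fin m → α) :=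
  WithLp.toLp 2 (fun j => if typeOf j = t then ((((Real.sqrt (Nat.multinomial Finset.univ t))⁻¹ : ℝ)) : ℂ)
    else 0)

def decr {α : Type*} [DecidableEq α] (t : α → ℕ) (k : α) : α → ℕ :=
  Function.update t k (t k - 1)

/-- `|j⟩⟨j| ⊗ I`: projector onto basis state `j` of the first tensor factor. -/
def projFirst (α : Type*) [DecidableEq α] (m : ℕ) (j : α) :
    Matrix (Fin (m+1) → α) (Fin (m+1) → α) ℂ :=
  Matrix.diagonal (fun a => if a 0 = j then 1 else 0)

/-- The vector `|j⟩ ⊗ |s(t⃗)⟩` in `(ℂ^α)^{⊗(m+1)}`. -/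
noncomputable def basisTensTypeVec (α : Type*) [Fintype α] [DecidableEq α] (m : ℕ)
    (j : α) (t : α → ℕ) : (Fin (m+1) → α) → ℂ :=
  fun a => (if a 0 = j then (1 : ℂ) else 0) * typeVec α m t (fun i => a i.succ)

/-!
The type vectors `s(t⃗)` span the symmetric subspace: they lie in it by polarization (distinct
monomials are linearly independent functions on `ℂ^d`, so each `s(t⃗)` is a combination of tensor
powers `φ^{⊗m}`), and `e_b - ∑_t ⟨s(t⃗), e_b⟩ s(t⃗)` is orthogonal to every `φ^{⊗m}` because exactly
`multinomial t⃗` basis words have type `t⃗`. Hence `Π_sym = ∑_t |s(t⃗)⟩⟨s(t⃗)|`. Since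
`multinomial t⃗ · t_k = (m+1) · multinomial t⃗_{-k}`, cutting the first factor down to `|k⟩` gives
`(|k⟩⟨k| ⊗ I) s(t⃗) = √(t_k/(m+1)) |k⟩ ⊗ s(t⃗_{-k})`, and grouping the types `t⃗` by
`(t_j, t_{j'})` yields the formula.
-/

open Finset Matrix
open scoped Nat

lemma sqrt_multinomial_ne_zero {ι : Type*} (s : Finset ι) (t : ι → ℕ) :
    √(Nat.multinomial s t : ℝ) ≠ 0 :=
  (Real.sqrt_pos.2 (Nat.cast_pos.2 (Nat.multinomial_pos _ _))).ne'

lemma apply_le_of_sum_eq {ι : Type*} [Fintype ι] {m : ℕ} {t : ι → ℕ} (ht : ∑ i, t i = m)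
    (i : ι) : t i ≤ m :=
  ht ▸ single_le_sum (fun _ _ => Nat.zero_le _) (mem_univ i)

lemma sum_Icc_sum_Icc_smul_sum_filter {ι R M : Type*} [Semiring R] [AddCommMonoid M]
    [Module R M] (s : Finset ι) (p q : ι → ℕ) {n : ℕ} (hs : ∀ x ∈ s, p x ≤ n ∧ q x ≤ n)
    (g : ℕ → ℕ → R) (hg₁ : ∀ l', g 0 l' = 0) (hg₂ : ∀ l, g l 0 = 0) (F : ι → M) :
    ∑ l ∈ Icc 1 n, ∑ l' ∈ Icc 1 n, g l l' • ∑ x ∈ s with q x = l' ∧ p x = l, F x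
      = ∑ x ∈ s, g (p x) (q x) • F x := by
  calc _ = ∑ ll' ∈ Icc 1 n ×ˢ Icc 1 n, ∑ x ∈ s with (p x, q x) = ll', g (p x) (q x) • F x := by
        rw [sum_product]
        refine sum_congr rfl fun l _ => sum_congr rfl fun l' _ => ?_
        rw [smul_sum]
        refine sum_congr (filter_congr fun x _ => by rw [Prod.ext_iff, and_comm]) fun x hx => ?_
        obtain ⟨hp, hq⟩ := Prod.mk.inj (mem_filter.1 hx).2
        rw [hp, hq]
    _ = ∑ x ∈ s with (p x, q x) ∈ Icc 1 n ×ˢ Icc 1 n, g (p x) (q x) • F x :=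
        sum_fiberwise_eq_sum_filter _ _ _ _
    _ = _ := by
        refine sum_filter_of_ne fun x hx hne => ?_
        have hp : p x ≠ 0 := fun h => hne (by rw [h, hg₁, zero_smul])
        have hq : q x ≠ 0 := fun h => hne (by rw [h, hg₂, zero_smul])
        simp only [mem_product, mem_Icc]
        have := hs x hx
        omega

theorem span_range_eval_monomials_eq_top {K σ ι : Type*} [Field K] [Infinite K] [Fintype σ]
    [Fintype ι] {e : ι → σ → ℕ} (he : Function.Injective e) :
    Submodule.span K (Set.range fun (x : σ → K) (s : ι) => ∏ i, x i ^ e s i) = ⊤ := by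
  classical
  -- a functional vanishing on the span is the coefficient vector of a polynomial that vanishes
  -- everywhere on `σ → K`, hence is zero
  by_contra hne
  obtain ⟨f, hf0, hle⟩ := Submodule.exists_le_ker_of_lt_top _ (lt_top_iff_ne_top.2 hne)
  apply hf0
  have hf (v : ι → K) : f v = ∑ s, v s * f (Pi.single s 1) := by
    conv_lhs => rw [← univ_sum_single v]
    simp_rw [map_sum, ← smul_eq_mul, ← map_smul, ← Pi.single_smul', smul_eq_mul, mul_one]
  let P : MvPolynomial σ K :=
    ∑ s, MvPolynomial.monomial (Finsupp.equivFunOnFinite.symm (e s)) (f (Pi.single s 1))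
  have hP : P = 0 := MvPolynomial.funext fun x => by
    have hx : f (fun s => ∏ i, x i ^ e s i) = 0 := hle (Submodule.subset_span ⟨x, rfl⟩)
    rw [hf] at hx
    simp [P, MvPolynomial.eval_monomial, Finsupp.prod_fintype, ← hx, mul_comm]
  ext s
  simpa [P, MvPolynomial.coeff_sum, MvPolynomial.coeff_monomial, he.eq_iff] using
    congrArg (MvPolynomial.coeff (Finsupp.equivFunOnFinite.symm (e s))) hP

section TypeCounting

variable {α : Type*} [Fintype α] [DecidableEq α]

lemma typeOf_apply_eq_tail_add {m : ℕ} (a : Fin (m + 1) → α) (k : α) :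
    typeOf a k = typeOf (Fin.tail a) k + if a 0 = k then 1 else 0 := by
  simp only [typeOf, card_filter, Fin.sum_univ_succ]
  exact add_comm _ _

lemma typeOf_tail_eq_decr_iff {m : ℕ} (a : Fin (m + 1) → α) {t : α → ℕ}
    (ht : 1 ≤ t (a 0)) : typeOf (Fin.tail a) = decr t (a 0) ↔ typeOf a = t := by
  simp only [funext_iff, decr]
  refine forall_congr' fun k => ?_
  rw [typeOf_apply_eq_tail_add]
  rcases eq_or_ne k (a 0) with rfl | hk
  · simp only [Function.update_self, if_true]
    omega
  · simp [Function.update_of_ne hk, Ne.symm hk]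

lemma one_le_typeOf_self {m : ℕ} (a : Fin (m + 1) → α) : 1 ≤ typeOf a (a 0) := by
  simp [typeOf_apply_eq_tail_add]

lemma sum_typeOf {m : ℕ} (a : Fin m → α) : ∑ i, typeOf a i = m := by
  simpa [typeOf] using
    (card_eq_sum_card_fiberwise (s := univ) (t := univ) (f := a) fun _ _ => mem_univ _).symm

lemma mem_Idm_iff {m : ℕ} {t : α → ℕ} : t ∈ Idm α m ↔ ∑ i, t i = m := by
  simp only [Idm, mem_filter, mem_image, mem_univ, true_and, and_iff_right_iff_imp]
  exact fun ht => ⟨fun i => ⟨t i, Nat.lt_succ_of_le (apply_le_of_sum_eq ht i)⟩, rfl⟩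

lemma apply_le_of_mem_Idm {m : ℕ} {t : α → ℕ} (ht : t ∈ Idm α m) (i : α) : t i ≤ m :=
  apply_le_of_sum_eq (mem_Idm_iff.1 ht) i

lemma typeOf_mem_Idm {m : ℕ} (a : Fin m → α) : typeOf a ∈ Idm α m :=
  mem_Idm_iff.2 (sum_typeOf a)

lemma sum_decr_add_one {t : α → ℕ} {k : α} (hk : 1 ≤ t k) :
    ∑ i, decr t k i + 1 = ∑ i, t i := by
  rw [decr, sum_update_of_mem (mem_univ k), ← add_sum_erase _ _ (mem_univ k),
    sdiff_singleton_eq_erase]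
  omega

lemma prod_factorial_eq_mul_prod_factorial_decr {t : α → ℕ} {k : α} (hk : 1 ≤ t k) :
    ∏ i, (t i)! = t k * ∏ i, (decr t k i)! := by
  rw [← mul_prod_erase _ _ (mem_univ k), ← mul_prod_erase univ (fun i => (decr t k i)!)
    (mem_univ k), ← mul_assoc, decr, Function.update_self, Nat.mul_factorial_pred (by omega)]
  exact congrArg _ <| prod_congr rfl fun i hi => by rw [Function.update_of_ne (ne_of_mem_erase hi)]

lemma multinomial_mul_apply_eq {t : α → ℕ} {k : α} (hk : 1 ≤ t k) :
    Nat.multinomial univ t * t k = (∑ i, t i) * Nat.multinomial univ (decr t k) := by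
  have hpos : 0 < ∏ i, (decr t k i)! := prod_pos fun i _ => Nat.factorial_pos _
  refine Nat.eq_of_mul_eq_mul_left hpos ?_
  have ht := Nat.multinomial_spec univ t
  have hdecr := Nat.multinomial_spec univ (decr t k)
  rw [prod_factorial_eq_mul_prod_factorial_decr hk, ← sum_decr_add_one hk,
    Nat.factorial_succ] at ht
  calc (∏ i, (decr t k i)!) * (Nat.multinomial univ t * t k)
      = (t k * ∏ i, (decr t k i)!) * Nat.multinomial univ t := by ring
    _ = (∑ i, decr t k i + 1) * (∏ i, (decr t k i)!) * Nat.multinomial univ (decr t k) := by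
      rw [ht, ← hdecr, mul_assoc]
    _ = _ := by rw [sum_decr_add_one hk]; ring

lemma card_typeOf_eq_multinomial {m : ℕ} {t : α → ℕ} (ht : ∑ i, t i = m) :
    #{a : Fin m → α | typeOf a = t} = Nat.multinomial univ t := by
  induction m generalizing t with
  | zero =>
    obtain rfl : t = 0 := funext fun i => sum_eq_zero_iff.1 ht i (mem_univ i)
    have htype (a : Fin 0 → α) : typeOf a = 0 := funext fun i => by simp [typeOf]
    simp [htype, Nat.multinomial]
  | succ m ih =>
    have hsplit : #{a : Fin (m + 1) → α | typeOf a = t}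
        = ∑ i, #{b : Fin m → α | typeOf (Fin.cons i b : Fin (m + 1) → α) = t} := by
      simp only [card_filter]
      rw [← Fintype.sum_equiv (Fin.consEquiv fun _ => α) _ _ fun _ => rfl, Fintype.sum_prod_type]
      rfl
    have hfiber (i : α) :
        (m + 1) * #{b : Fin m → α | typeOf (Fin.cons i b : Fin (m + 1) → α) = t}
          = Nat.multinomial univ t * t i := by
      rcases Nat.eq_zero_or_pos (t i) with hi | hi
      · rw [hi, mul_zero, card_eq_zero.2, mul_zero]
        refine filter_eq_empty_iff.2 fun b _ hb => ?_
        simpa [hb, hi] using one_le_typeOf_self (Fin.cons i b : Fin (m + 1) → α)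
      · rw [multinomial_mul_apply_eq hi, ht, ← ih (by have := sum_decr_add_one hi; omega)]
        congr 2
        ext b
        simpa using (typeOf_tail_eq_decr_iff (Fin.cons i b : Fin (m + 1) → α) (by simpa)).symm
    apply Nat.eq_of_mul_eq_mul_left m.succ_pos
    rw [hsplit, mul_sum, sum_congr rfl fun i _ => hfiber i, ← mul_sum, ht, mul_comm]

end TypeCounting

section TypeVectors

variable {α : Type*} [Fintype α] [DecidableEq α] {m : ℕ}

lemma typeVec_apply (t : α → ℕ) (a : Fin m → α) :
    typeVec α m t a =
      if typeOf a = t then (((√(Nat.multinomial univ t : ℝ))⁻¹ : ℝ) : ℂ) else 0 :=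
  rfl

lemma prod_apply_eq_prod_pow_typeOf {M : Type*} [CommMonoid M] (a : Fin m → α) (x : α → M) :
    ∏ k, x (a k) = ∏ i, x i ^ typeOf a i := by
  rw [← prod_fiberwise univ a]
  refine prod_congr rfl fun i _ => ?_
  rw [typeOf, ← prod_const]
  exact prod_congr rfl fun k hk => by rw [(mem_filter.1 hk).2]

lemma tensPow_eq_sum_typeVec (x : α → ℂ) :
    tensPow α m x = ∑ t ∈ Idm α m,
      ((∏ i, x i ^ t i) * (√(Nat.multinomial univ t : ℝ) : ℂ)) • typeVec α m t := by
  ext a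
  simp only [WithLp.ofLp_sum, Finset.sum_apply, WithLp.ofLp_smul, Pi.smul_apply, typeVec_apply,
    smul_eq_mul, mul_ite, mul_zero, sum_ite_eq, typeOf_mem_Idm, if_true]
  rw [mul_assoc, ← Complex.ofReal_mul, mul_inv_cancel₀ (sqrt_multinomial_ne_zero _ _),
    Complex.ofReal_one, mul_one, ← prod_apply_eq_prod_pow_typeOf]
  rfl

lemma typeVec_mem_symSubspace {t : α → ℕ} (ht : t ∈ Idm α m) :
    typeVec α m t ∈ symSubspace α m := by
  let L := Fintype.linearCombination ℂ fun s : Idm α m =>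
    (√(Nat.multinomial univ (s : α → ℕ) : ℝ) : ℂ) • typeVec α m s
  have hrange : LinearMap.range L = symSubspace α m := by
    rw [LinearMap.range_eq_map, ← span_range_eval_monomials_eq_top Subtype.val_injective,
      Submodule.map_span, ← Set.range_comp]
    congr 2
    funext x
    simp only [Function.comp_apply, L, Fintype.linearCombination_apply, smul_smul,
      tensPow_eq_sum_typeVec, ← sum_coe_sort (Idm α m)]
  rw [← hrange]
  refine ⟨Pi.single ⟨t, ht⟩ (((√(Nat.multinomial univ t : ℝ))⁻¹ : ℝ) : ℂ), ?_⟩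
  rw [Fintype.linearCombination_apply_single, smul_smul, ← Complex.ofReal_mul,
    inv_mul_cancel₀ (sqrt_multinomial_ne_zero _ _), Complex.ofReal_one, one_smul]

lemma inner_typeVec_tensPow {t : α → ℕ} (ht : t ∈ Idm α m) (x : α → ℂ) :
    inner ℂ (typeVec α m t) (tensPow α m x)
      = (√(Nat.multinomial univ t : ℝ) : ℂ) * ∏ i, x i ^ t i := by
  have hterm (a : Fin m → α) : inner ℂ (typeVec α m t a) (tensPow α m x a) =
      if typeOf a = t then (((√(Nat.multinomial univ t : ℝ))⁻¹ : ℝ) : ℂ) * ∏ i, x i ^ t i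
      else 0 := by
    rw [typeVec_apply]
    split_ifs with h
    · simp [tensPow, prod_apply_eq_prod_pow_typeOf, h, mul_comm]
    · simp
  rw [PiLp.inner_apply, sum_congr rfl fun a _ => hterm a, sum_ite, sum_const_zero, add_zero,
    sum_const, card_typeOf_eq_multinomial (mem_Idm_iff.1 ht), nsmul_eq_mul, ← mul_assoc]
  congr 1
  rw [← Complex.ofReal_natCast, ← Complex.ofReal_mul, ← div_eq_mul_inv, Real.div_sqrt]

lemma starProjection_symSubspace_single (b : Fin m → α) :
    (symSubspace α m).starProjection (EuclideanSpace.single b 1)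
      = ∑ t ∈ Idm α m, star (typeVec α m t b) • typeVec α m t := by
  refine Submodule.eq_starProjection_of_mem_of_inner_eq_zero
    (Submodule.sum_mem _ fun t ht => Submodule.smul_mem _ _ (typeVec_mem_symSubspace ht))
    fun w hw => Submodule.span_le (p := LinearMap.ker (innerₛₗ ℂ _)) |>.2 ?_ hw
  rintro _ ⟨x, rfl⟩
  have hsum : ∑ t ∈ Idm α m, typeVec α m t b *
      ((√(Nat.multinomial univ t : ℝ) : ℂ) * ∏ i, x i ^ t i) = ∏ i, x i ^ typeOf b i := by
    simp only [typeVec_apply, ite_mul, zero_mul, sum_ite_eq, typeOf_mem_Idm, if_true, ← mul_assoc,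
      ← Complex.ofReal_mul, inv_mul_cancel₀ (sqrt_multinomial_ne_zero _ _), Complex.ofReal_one,
      one_mul]
  change inner ℂ (_ - _) (tensPow α m x) = 0
  simp only [inner_sub_left, sum_inner, inner_smul_left, starRingEnd_apply, star_star,
    EuclideanSpace.inner_single_left, map_one, one_mul]
  rw [sum_congr rfl fun t ht => by rw [inner_typeVec_tensPow ht], hsum, sub_eq_zero,
    ← prod_apply_eq_prod_pow_typeOf]
  rfl

lemma symProj_eq_sum_vecMulVec :
    symProj α m = ∑ t ∈ Idm α m, vecMulVec ⇑(typeVec α m t) (star ⇑(typeVec α m t)) := by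
  ext a b
  rw [symProj, Submodule.coe_orthogonalProjectionOnto_apply, starProjection_symSubspace_single,
    EuclideanSpace.inner_single_left]
  simp [Matrix.sum_apply, vecMulVec_apply, mul_comm]

end TypeVectors

section FirstFactor

variable {α : Type*} [DecidableEq α] {m : ℕ}

lemma conjTranspose_projFirst (k : α) : (projFirst α m k)ᴴ = projFirst α m k := by
  simp [projFirst, diagonal_conjTranspose, apply_ite star]

variable [Fintype α]

lemma inv_sqrt_multinomial_eq {t : α → ℕ} (ht : ∑ i, t i = m + 1) {k : α} (hk : 1 ≤ t k) :
    (√(Nat.multinomial univ t : ℝ))⁻¹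
      = √(t k / ((m : ℝ) + 1)) * (√(Nat.multinomial univ (decr t k) : ℝ))⁻¹ := by
  have hmul : (Nat.multinomial univ t : ℝ) * t k = (m + 1) * Nat.multinomial univ (decr t k) := by
    exact_mod_cast ht ▸ multinomial_mul_apply_eq hk
  have htk : (0 : ℝ) < t k := by exact_mod_cast hk
  rw [← Real.sqrt_inv, ← Real.sqrt_inv, ← Real.sqrt_mul (by positivity)]
  congr 1
  have := Nat.multinomial_pos univ t
  have := Nat.multinomial_pos univ (decr t k)
  field_simp
  linarith

lemma projFirst_mul_vecMulVec_mul_projFirst (k k' : α) (u : (Fin (m + 1) → α) → ℂ) :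
    projFirst α m k' * vecMulVec u (star u) * projFirst α m k
      = vecMulVec (projFirst α m k' *ᵥ u) (star (projFirst α m k *ᵥ u)) := by
  rw [mul_vecMulVec, vecMulVec_mul, star_mulVec, conjTranspose_projFirst]

lemma projFirst_mulVec_typeVec {t : α → ℕ} (ht : t ∈ Idm α (m + 1)) (k : α) :
    projFirst α m k *ᵥ ⇑(typeVec α (m + 1) t)
      = ((√(t k / ((m : ℝ) + 1)) : ℝ) : ℂ) • basisTensTypeVec α m k (decr t k) := by
  funext a
  simp only [projFirst, mulVec_diagonal, Pi.smul_apply, basisTensTypeVec, smul_eq_mul]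
  by_cases ha : a 0 = k
  swap
  · simp [ha]
  subst ha
  rcases Nat.eq_zero_or_pos (t (a 0)) with h0 | hpos
  · have hne : typeOf a ≠ t := fun h => by simpa [h, h0] using one_le_typeOf_self a
    simp [typeVec_apply, hne, h0]
  · have htail : typeOf (fun i => a i.succ) = decr t (a 0) ↔ typeOf a = t :=
      typeOf_tail_eq_decr_iff a hpos
    simp only [typeVec_apply, htail, if_true, one_mul, mul_ite, mul_zero]
    split_ifs
    · rw [inv_sqrt_multinomial_eq (mem_Idm_iff.1 ht) hpos, Complex.ofReal_mul]
    · rfl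

end FirstFactor

theorem symProj_firstFactor_compression_general (d m : ℕ) (j j' : Fin d) :
    projFirst (Fin d) m j' * symProj (Fin d) (m+1) * projFirst (Fin d) m j
      = ∑ l ∈ Finset.Icc 1 (m+1), ∑ l' ∈ Finset.Icc 1 (m+1),
          ((Real.sqrt ((l : ℝ) / ((m : ℝ) + 1)) * Real.sqrt ((l' : ℝ) / ((m : ℝ) + 1)) : ℝ) : ℂ) •
            ∑ t ∈ (Idm (Fin d) (m+1)).filter (fun t => t j' = l' ∧ t j = l),
              Matrix.vecMulVec (basisTensTypeVec (Fin d) m j' (decr t j'))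
                (star (basisTensTypeVec (Fin d) m j (decr t j))) := by
  set s : (Fin d → ℕ) → EuclideanSpace ℂ (Fin (m + 1) → Fin d) := typeVec (Fin d) (m + 1)
  calc _ = ∑ t ∈ Idm (Fin d) (m + 1), vecMulVec (projFirst (Fin d) m j' *ᵥ ⇑(s t))
        (star (projFirst (Fin d) m j *ᵥ ⇑(s t))) := by
        rw [symProj_eq_sum_vecMulVec, mul_sum, sum_mul]
        exact sum_congr rfl fun t _ => projFirst_mul_vecMulVec_mul_projFirst j j' _
    _ = ∑ t ∈ Idm (Fin d) (m + 1),
          ((√(t j / ((m : ℝ) + 1)) * √(t j' / ((m : ℝ) + 1)) : ℝ) : ℂ) •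
            vecMulVec (basisTensTypeVec (Fin d) m j' (decr t j'))
              (star (basisTensTypeVec (Fin d) m j (decr t j))) :=
        sum_congr rfl fun t ht => by
          rw [projFirst_mulVec_typeVec ht, projFirst_mulVec_typeVec ht, star_smul,
            Complex.star_def, Complex.conj_ofReal, smul_vecMulVec, vecMulVec_smul, smul_smul,
            ← Complex.ofReal_mul, mul_comm (√_)]
    _ = _ := by
        rw [sum_Icc_sum_Icc_smul_sum_filter _ (fun t => t j) (fun t => t j')
          (fun t ht => ⟨apply_le_of_mem_Idm ht j, apply_le_of_mem_Idm ht j'⟩)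
          (fun l l' => ((√(l / ((m : ℝ) + 1)) * √(l' / ((m : ℝ) + 1)) : ℝ) : ℂ))
          (by simp) (by simp)]

/-- **Compression of the symmetric projector on the first factor**: for `j ≠ j'`,
`(|j'⟩⟨j'| ⊗ I) Π_sym^{d,m+1} (|j⟩⟨j| ⊗ I)
  = |j'⟩⟨j| ⊗ Σ_{l,l'=1}^{m+1} √(l/(m+1))√(l'/(m+1))
      Σ_{t⃗ : t_{j'} = l', t_j = l} |s(t⃗_{-j'})⟩⟨s(t⃗_{-j})|`. -/
theorem symProj_firstFactor_compression (d m : ℕ) (j j' : Fin d) (hjj : j ≠ j') :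
    projFirst (Fin d) m j' * symProj (Fin d) (m+1) * projFirst (Fin d) m j
      = ∑ l ∈ Finset.Icc 1 (m+1), ∑ l' ∈ Finset.Icc 1 (m+1),
          ((Real.sqrt ((l : ℝ) / ((m : ℝ) + 1)) * Real.sqrt ((l' : ℝ) / ((m : ℝ) + 1)) : ℝ) : ℂ) •
            ∑ t ∈ (Idm (Fin d) (m+1)).filter (fun t => t j' = l' ∧ t j = l),
              Matrix.vecMulVec (basisTensTypeVec (Fin d) m j' (decr t j'))
                (star (basisTensTypeVec (Fin d) m j (decr t j))) :=
  symProj_firstFactor_compression_general d m j j'
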